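/- Let H be finite and let C : H → [0,1] and F : H → [0,1] be true cost and FNR functions, with empirical versions Ĉ and F̂ satisfying |Ĉ(h) − C(h)| ≤ ε and |F̂(h) − F(h)| ≤ ε for all h ∈ H. If h* minimizes C over the feasible set {h : F(h) ≤ η} (assumed nonempty) and ĥ minimizes Ĉ over {h : F̂(h) ≤ η − ε}, and moreover F(h*) ≤ η − 2ε, then F(ĥ) ≤ η and C(ĥ) ≤ C(h*) + 2ε. -/

import Mathlib

/-!
Feasibility transfers between the true and the empirical constraint at the price of `ε` each
way: the margin `2ε` of `h*` keeps it feasible for the empirical problem at level `η - ε`, and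
`ĥ`, feasible there, is feasible for the true problem at level `η`. Since `h*` is then a
competitor of `ĥ`, `C ĥ ≤ Ĉ ĥ + ε ≤ Ĉ h* + ε ≤ C h* + 2ε`.
-/

section UniformApproximation

variable {α : Type*}

theorem le_add_of_abs_sub_le_of_le [AddCommGroup α] [LinearOrder α] [IsOrderedAddMonoid α]
    {x y t ε : α} (hxy : |x - y| ≤ ε) (hy : y ≤ t) : x ≤ t + ε :=
  calc x ≤ y + ε := sub_le_iff_le_add'.mp (abs_sub_le_iff.mp hxy).1
    _ ≤ t + ε := add_le_add_left hy ε

theorem le_add_two_mul_of_abs_sub_le_of_le [Ring α] [LinearOrder α] [IsOrderedRing α]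
    {x x' y y' ε : α} (hx : |x' - x| ≤ ε) (hy : |y' - y| ≤ ε) (h : x' ≤ y') :
    x ≤ y + 2 * ε :=
  calc x ≤ y' + ε := le_add_of_abs_sub_le_of_le (abs_sub_comm x' x ▸ hx) h
    _ ≤ y + ε + ε := add_le_add_left (le_add_of_abs_sub_le_of_le hy le_rfl) ε
    _ = y + 2 * ε := by rw [two_mul, add_assoc]

end UniformApproximation

theorem stmt_2_general {H : Type*}
    (C F Chat Fhat : H → ℝ) (η ε : ℝ)
    (hCapprox : ∀ h, |Chat h - C h| ≤ ε) (hFapprox : ∀ h, |Fhat h - F h| ≤ ε)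
    (hstar hhat : H)
    (hstar_feas : F hstar ≤ η - 2 * ε)
    (hhat_feas : Fhat hhat ≤ η - ε)
    (hhat_min : ∀ h, Fhat h ≤ η - ε → Chat hhat ≤ Chat h) :
    F hhat ≤ η ∧ C hhat ≤ C hstar + 2 * ε := by
  have hhat_true_feas : F hhat ≤ η := by
    have := le_add_of_abs_sub_le_of_le (abs_sub_comm (Fhat hhat) _ ▸ hFapprox hhat) hhat_feas
    rwa [sub_add_cancel] at this
  have hstar_emp_feas : Fhat hstar ≤ η - ε := by
    have := le_add_of_abs_sub_le_of_le (hFapprox hstar) hstar_feas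
    linarith
  exact ⟨hhat_true_feas,
    le_add_two_mul_of_abs_sub_le_of_le (hCapprox hhat) (hCapprox hstar)
      (hhat_min hstar hstar_emp_feas)⟩

theorem stmt_2 {H : Type*} [Fintype H] [Nonempty H]
    (C F Chat Fhat : H → ℝ) (η ε : ℝ) (hε : 0 < ε) (hη : 0 ≤ η - 2 * ε)
    (hCbd : ∀ h, C h ∈ Set.Icc (0 : ℝ) 1) (hFbd : ∀ h, F h ∈ Set.Icc (0 : ℝ) 1)
    (hCapprox : ∀ h, |Chat h - C h| ≤ ε) (hFapprox : ∀ h, |Fhat h - F h| ≤ ε)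
    (hstar hhat : H)
    (hstar_feas : F hstar ≤ η - 2 * ε)
    (hstar_min : ∀ h, F h ≤ η → C hstar ≤ C h)
    (hhat_feas : Fhat hhat ≤ η - ε)
    (hhat_min : ∀ h, Fhat h ≤ η - ε → Chat hhat ≤ Chat h) :
    F hhat ≤ η ∧ C hhat ≤ C hstar + 2 * ε :=
  stmt_2_general C F Chat Fhat η ε hCapprox hFapprox hstar hhat hstar_feas hhat_feas hhat_min
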